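/- arXiv:1906.08572 — 5 statements merged into one kernel-verified Lean document; each statement's English description precedes it below -/
import Mathlib

section
/- Let D, R ∈ ℝ^{p×p} be symmetric positive semidefinite, with block decompositions D = [[U₁,V₁],[V₁ᵀ,W₁]] and R = [[U₂,V₂],[V₂ᵀ,W₂]] (blocks of sizes q and p−q). Then the null space of W₁ − jW₂ is contained in the null space of V₁ − jV₂. -/
/-!
Both `η* W₁ η` and `η* W₂ η` are nonnegative reals, and `W₁ η = i W₂ η` makes the first one `i`
times the second, so both vanish and hence `W₁ η = W₂ η = 0`. In a positive semidefinite block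
matrix `[[A, B], [Bᴴ, D]]` with `D η = 0`, the vector `(0, η)` has vanishing quadratic form, so
it lies in the kernel and `B η = 0`.
-/

open scoped ComplexOrder

theorem Complex.eq_zero_of_nonneg_of_eq_I_mul {a b : ℂ} (ha : 0 ≤ a) (hb : 0 ≤ b)
    (hab : a = I * b) : a = 0 ∧ b = 0 := by
  obtain ⟨-, hai⟩ := le_def.mp ha
  obtain ⟨-, hbi⟩ := le_def.mp hb
  obtain ⟨hre, him⟩ := Complex.ext_iff.mp hab
  simp only [mul_re, mul_im, I_re, I_im] at hre him
  rw [zero_im] at hai hbi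
  constructor <;> apply ext <;> simp only [zero_re, zero_im] <;> linarith

namespace Matrix

variable {m n 𝕜 : Type*} [Fintype m] [Fintype n] [RCLike 𝕜]

theorem PosSemidef.map_ofReal {A : Matrix n n ℝ} (hA : A.PosSemidef) :
    (A.map (RCLike.ofReal : ℝ → 𝕜)).PosSemidef := by
  classical
  open scoped MatrixOrder Matrix.Norms.L2Operator in
  obtain ⟨B, rfl⟩ := CStarAlgebra.nonneg_iff_eq_star_mul_self.mp hA.nonneg
  have hmap : (star B * B).map (algebraMap ℝ 𝕜) =
      (B.map (algebraMap ℝ 𝕜))ᴴ * B.map (algebraMap ℝ 𝕜) := by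
    rw [Matrix.map_mul, star_eq_conjTranspose, conjTranspose_map _ fun x ↦ by simp]
  exact hmap ▸ posSemidef_conjTranspose_mul_self _

theorem PosSemidef.fromBlocks_map_ofReal {A : Matrix m m ℝ} {B : Matrix m n ℝ}
    {D : Matrix n n ℝ} (h : (fromBlocks A B Bᵀ D).PosSemidef) :
    (fromBlocks (A.map RCLike.ofReal) (B.map RCLike.ofReal) (B.map RCLike.ofReal)ᴴ
      (D.map (RCLike.ofReal : ℝ → 𝕜))).PosSemidef := by
  have := h.map_ofReal (𝕜 := 𝕜)
  rwa [fromBlocks_map, ← conjTranspose_eq_transpose_of_trivial,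
    conjTranspose_map _ fun x ↦ by simp] at this

theorem PosSemidef.mulVec₁₂_eq_zero {A : Matrix m m 𝕜} {B : Matrix m n 𝕜} {D : Matrix n n 𝕜}
    (h : (fromBlocks A B Bᴴ D).PosSemidef) {x : n → 𝕜} (hx : D *ᵥ x = 0) : B *ᵥ x = 0 := by
  have hmul : fromBlocks A B Bᴴ D *ᵥ Sum.elim 0 x = Sum.elim (B *ᵥ x) 0 := by
    simp [fromBlocks_mulVec, hx]
  have hquad : star (Sum.elim 0 x) ⬝ᵥ fromBlocks A B Bᴴ D *ᵥ Sum.elim 0 x = 0 := by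
    simp [hmul, dotProduct]
  have hker := congrFun ((h.dotProduct_mulVec_zero_iff _).mp hquad)
  ext i
  simpa [hmul] using hker (Sum.inl i)

theorem PosSemidef.mulVec_eq_zero_of_sub_I_smul {A B : Matrix n n ℂ} (hA : A.PosSemidef)
    (hB : B.PosSemidef) {x : n → ℂ} (h : (A - Complex.I • B) *ᵥ x = 0) :
    A *ᵥ x = 0 ∧ B *ᵥ x = 0 := by
  have hAB : A *ᵥ x = Complex.I • B *ᵥ x := by
    rwa [sub_mulVec, smul_mulVec, sub_eq_zero] at h
  obtain ⟨hAx, hBx⟩ := Complex.eq_zero_of_nonneg_of_eq_I_mul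
    (hA.dotProduct_mulVec_nonneg x) (hB.dotProduct_mulVec_nonneg x)
    (by rw [hAB, dotProduct_smul, smul_eq_mul])
  exact ⟨(hA.dotProduct_mulVec_zero_iff x).mp hAx, (hB.dotProduct_mulVec_zero_iff x).mp hBx⟩

end Matrix

open Matrix in
theorem nullspace_inclusion_blocks
    (q r : ℕ)
    (U₁ U₂ : Matrix (Fin q) (Fin q) ℝ)
    (V₁ V₂ : Matrix (Fin q) (Fin r) ℝ)
    (W₁ W₂ : Matrix (Fin r) (Fin r) ℝ)
    (hD : (Matrix.fromBlocks U₁ V₁ V₁ᵀ W₁).PosSemidef)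
    (hR : (Matrix.fromBlocks U₂ V₂ V₂ᵀ W₂).PosSemidef)
    (η : Fin r → ℂ)
    (hη : (W₁.map Complex.ofReal - Complex.I • W₂.map Complex.ofReal).mulVec η = 0) :
    (V₁.map Complex.ofReal - Complex.I • V₂.map Complex.ofReal).mulVec η = 0 := by
  have hD' := hD.fromBlocks_map_ofReal (𝕜 := ℂ)
  have hR' := hR.fromBlocks_map_ofReal (𝕜 := ℂ)
  obtain ⟨hW₁, hW₂⟩ :=
    (hD'.submatrix Sum.inr).mulVec_eq_zero_of_sub_I_smul (hR'.submatrix Sum.inr) hη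
  have hV₁ : V₁.map Complex.ofReal *ᵥ η = 0 := hD'.mulVec₁₂_eq_zero hW₁
  have hV₂ : V₂.map Complex.ofReal *ᵥ η = 0 := hR'.mulVec₁₂_eq_zero hW₂
  rw [sub_mulVec, smul_mulVec, hV₁, hV₂, smul_zero, sub_zero]
end

section
/- Let D, R be real symmetric PSD p×p matrices with block decompositions D = [[U₁,V₁],[V₁ᵀ,W₁]], R = [[U₂,V₂],[V₂ᵀ,W₂]]. Then the Schur complement of D+jR with respect to the first q coordinates equals (U₁+jU₂) − (V₁+jV₂)(W₁+jW₂)⁺(V₁+jV₂)ᵀ, where ⁺ denotes the Moore–Penrose pseudoinverse. -/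
open Matrix in
theorem schur_complement_pseudoinverse_formula
    (q r : ℕ)
    (U₁ U₂ : Matrix (Fin q) (Fin q) ℝ)
    (V₁ V₂ : Matrix (Fin q) (Fin r) ℝ)
    (W₁ W₂ : Matrix (Fin r) (Fin r) ℝ)
    (hD : (Matrix.fromBlocks U₁ V₁ V₁ᵀ W₁).PosSemidef)
    (hR : (Matrix.fromBlocks U₂ V₂ V₂ᵀ W₂).PosSemidef)
    (E : Matrix (Fin r) (Fin q) ℂ)
    (Γ : Matrix (Fin q) (Fin q) ℂ)
    (h : ((Matrix.fromBlocks U₁ V₁ V₁ᵀ W₁).map Complex.ofReal +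
            Complex.I • (Matrix.fromBlocks U₂ V₂ V₂ᵀ W₂).map Complex.ofReal) *
          Matrix.fromBlocks 1 0 E 0 = Matrix.fromBlocks Γ 0 0 0)
    -- P is the Moore–Penrose pseudoinverse of W₁ + jW₂
    (P : Matrix (Fin r) (Fin r) ℂ)
    (hP1 : (W₁.map Complex.ofReal + Complex.I • W₂.map Complex.ofReal) * P *
            (W₁.map Complex.ofReal + Complex.I • W₂.map Complex.ofReal) =
            W₁.map Complex.ofReal + Complex.I • W₂.map Complex.ofReal)
    (hP2 : P * (W₁.map Complex.ofReal + Complex.I • W₂.map Complex.ofReal) * P = P)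
    (hP3 : ((W₁.map Complex.ofReal + Complex.I • W₂.map Complex.ofReal) * P)ᴴ =
            (W₁.map Complex.ofReal + Complex.I • W₂.map Complex.ofReal) * P)
    (hP4 : (P * (W₁.map Complex.ofReal + Complex.I • W₂.map Complex.ofReal))ᴴ =
            P * (W₁.map Complex.ofReal + Complex.I • W₂.map Complex.ofReal)) :
    Γ = (U₁.map Complex.ofReal + Complex.I • U₂.map Complex.ofReal) -
        (V₁.map Complex.ofReal + Complex.I • V₂.map Complex.ofReal) * P *
          (V₁.map Complex.ofReal + Complex.I • V₂.map Complex.ofReal)ᵀ := by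
  set UC := U₁.map Complex.ofReal + Complex.I • U₂.map Complex.ofReal with hUC
  set VC := V₁.map Complex.ofReal + Complex.I • V₂.map Complex.ofReal with hVC
  set WC := W₁.map Complex.ofReal + Complex.I • W₂.map Complex.ofReal with hWC
  -- symmetry of W₁, W₂
  have hW1 : W₁ᵀ = W₁ := by
    have := hD.isHermitian
    rw [Matrix.IsHermitian, Matrix.conjTranspose_eq_transpose_of_trivial,
      Matrix.fromBlocks_transpose] at this
    have := congrArg Matrix.toBlocks₂₂ this
    simpa [Matrix.toBlocks_fromBlocks₂₂] using this
  have hW2 : W₂ᵀ = W₂ := by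
    have := hR.isHermitian
    rw [Matrix.IsHermitian, Matrix.conjTranspose_eq_transpose_of_trivial,
      Matrix.fromBlocks_transpose] at this
    have := congrArg Matrix.toBlocks₂₂ this
    simpa [Matrix.toBlocks_fromBlocks₂₂] using this
  have hWt : WCᵀ = WC := by
    rw [hWC, Matrix.transpose_add, Matrix.transpose_smul, ← Matrix.transpose_map,
      ← Matrix.transpose_map, hW1, hW2]
  -- rewrite h in block form
  have h' : Matrix.fromBlocks (UC + VC * E) 0 (VCᵀ + WC * E) 0
      = Matrix.fromBlocks Γ (0 : Matrix (Fin q) (Fin r) ℂ) 0 0 := by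
    rw [← h, Matrix.fromBlocks_map, Matrix.fromBlocks_map, Matrix.fromBlocks_smul,
      Matrix.fromBlocks_add, Matrix.fromBlocks_multiply]
    congr 1 <;> simp [hUC, hVC, hWC, Matrix.transpose_map, Matrix.transpose_add,
      Matrix.transpose_smul, add_mul]
  have hΓ : Γ = UC + VC * E := by
    have := congrArg Matrix.toBlocks₁₁ h'
    simpa [Matrix.toBlocks_fromBlocks₁₁] using this.symm
  have hWE : VCᵀ + WC * E = 0 := by
    have := congrArg Matrix.toBlocks₂₁ h'
    simpa [Matrix.toBlocks_fromBlocks₂₁] using this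
  have hVt : VCᵀ = -(WC * E) := by linear_combination (norm := module) hWE
  have hV : VC = -(Eᵀ * WC) := by
    calc VC = VCᵀᵀ := (Matrix.transpose_transpose VC).symm
    _ = -(Eᵀ * WCᵀ) := by rw [hVt]; simp [Matrix.transpose_mul]
    _ = -(Eᵀ * WC) := by rw [hWt]
  rw [hΓ, hV]
  have ht : (-(Eᵀ * WC))ᵀ = -(WC * E) := by
    rw [Matrix.transpose_neg, Matrix.transpose_mul, Matrix.transpose_transpose, hWt]
  rw [ht]
  have key : Eᵀ * WC * P * (WC * E) = Eᵀ * WC * E := by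
    calc Eᵀ * WC * P * (WC * E) = Eᵀ * (WC * P * WC) * E := by
          simp only [Matrix.mul_assoc]
    _ = Eᵀ * WC * E := by rw [hP1, Matrix.mul_assoc]
  simp only [Matrix.neg_mul, Matrix.mul_neg, neg_neg, key]
  abel
end

section
/- Let Γ ∈ ℂ^{q×q} be complex symmetric (Γᵀ = Γ) with Γ𝟙_q = 0, and suppose 0 is an eigenvalue of Γ of algebraic multiplicity at least 2. Then there exists an eigenvector y of Γ for eigenvalue 0 with y ∉ span{𝟙_q}. (Equivalently, the geometric multiplicity of 0 is at least 2: complex symmetry rules out a Jordan block attached only to 𝟙_q.) -/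
/-!
Since `Γ` is symmetric and kills `𝟙`, every vector `Γ w` is orthogonal to `𝟙` for the bilinear
form `⬝ᵥ`, while `𝟙 ⬝ᵥ 𝟙 = q ≠ 0`; so `𝟙 ∉ range Γ`. If the kernel of `Γ` were contained in
`span {𝟙}`, kernel and range would meet trivially, which forbids Jordan chains at `0`: the
generalized `0`-eigenspace would be the kernel, of dimension at most `1`. But that dimension is
the algebraic multiplicity of `0`, which is at least `2`.
-/

open Matrix Module LinearMap

namespace Module.End

variable {R M : Type*} [CommRing R] [AddCommGroup M] [Module R M]

theorem ker_pow_le_ker_of_disjoint {f : End R M} (h : Disjoint (ker f) (range f)) :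
    ∀ k : ℕ, ker (f ^ k) ≤ ker f
  | 0, x, hx => by simp_all
  | k + 1, x, hx => by
    have hfx : f x ∈ ker f := ker_pow_le_ker_of_disjoint h k <| by
      rwa [mem_ker, ← Module.End.mul_apply, ← pow_succ]
    exact h.le_bot ⟨hfx, mem_range_self f x⟩

theorem maxGenEigenspace_zero_eq_ker_of_disjoint {f : End R M}
    (h : Disjoint (ker f) (range f)) : f.maxGenEigenspace 0 = ker f := by
  refine le_antisymm (fun x hx => ?_) (f.eigenspace_zero ▸ eigenspace_le_maxGenEigenspace)
  obtain ⟨k, hk⟩ := (mem_maxGenEigenspace f 0 x).mp hx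
  exact ker_pow_le_ker_of_disjoint h k (by simpa using hk)

end Module.End

namespace Matrix

variable {n R : Type*} [Fintype n] [DecidableEq n]

theorem finrank_maxGenEigenspace_zero_toLin' [Field R] (A : Matrix n n R) :
    finrank R (End.maxGenEigenspace (toLin' A) 0) = A.charpoly.rootMultiplicity 0 := by
  rw [LinearMap.finrank_maxGenEigenspace_zero_eq, charpoly_toLin',
    Polynomial.rootMultiplicity_eq_natTrailingDegree']

theorem notMem_range_toLin'_of_isSymm [CommRing R] {A : Matrix n n R} (hA : A.IsSymm)
    {v : n → R} (hv : A *ᵥ v = 0) (hvv : v ⬝ᵥ v ≠ 0) : v ∉ range (toLin' A) := by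
  rintro ⟨w, rfl⟩
  rw [toLin'_apply] at hv hvv
  refine hvv ?_
  calc A *ᵥ w ⬝ᵥ A *ᵥ w = (Aᵀ *ᵥ (A *ᵥ w)) ⬝ᵥ w := by
        rw [dotProduct_mulVec, mulVec_transpose]
    _ = 0 := by rw [hA.eq, hv, zero_dotProduct]

end Matrix

open Matrix in
theorem symmetric_zero_eigenvector_outside_ones
    (q : ℕ)
    (Γ : Matrix (Fin q) (Fin q) ℂ)
    (hsymm : Γᵀ = Γ)
    (hones : Γ.mulVec (fun _ => 1) = 0)
    (hmult : 2 ≤ (Matrix.charpoly Γ).rootMultiplicity 0) :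
    ∃ y : Fin q → ℂ, Γ.mulVec y = 0 ∧ ∀ c : ℂ, y ≠ c • (fun _ => 1 : Fin q → ℂ) := by
  set u : Fin q → ℂ := fun _ => 1
  set f : End ℂ (Fin q → ℂ) := toLin' Γ
  have hrank : 2 ≤ finrank ℂ (f.maxGenEigenspace 0) :=
    (finrank_maxGenEigenspace_zero_toLin' Γ).symm ▸ hmult
  have hq : (q : ℂ) ≠ 0 := by
    have := hrank.trans (Submodule.finrank_le (f.maxGenEigenspace 0))
    rw [finrank_fin_fun] at this
    exact_mod_cast (by omega : q ≠ 0)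
  by_contra! hcon
  have hker : ker f ≤ ℂ ∙ u := fun y hy => by
    obtain ⟨c, rfl⟩ := hcon y hy
    exact Submodule.smul_mem _ c (Submodule.mem_span_singleton_self u)
  have hrange : u ∉ range f :=
    notMem_range_toLin'_of_isSymm hsymm hones (by simpa [u, dotProduct] using hq)
  have hdisj : Disjoint (ker f) (range f) :=
    (Submodule.disjoint_span_singleton_of_notMem hrange).symm.mono_left hker
  have hle : finrank ℂ (ker f) ≤ 1 :=
    (Submodule.finrank_mono hker).trans ((finrank_span_le_card {u}).trans (by simp))
  rw [End.maxGenEigenspace_zero_eq_ker_of_disjoint hdisj] at hrank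
  omega
end

section
/- Let D, R be real symmetric PSD p×p matrices and Γ = schur(D+jR, q) via (D+jR)[I_q;E]=[Γ;0]. Suppose ȳ ∈ ℂ^q, ḡ ∈ ℂ^{p−q}, and μ ∈ ℝ satisfy D[ȳ;ḡ] = 0 and R[ȳ;ḡ] = [μȳ; 0]. Then Γȳ = jμȳ, i.e., ȳ is an eigenvector of Γ (if nonzero) for the purely imaginary eigenvalue jμ. -/
open Matrix in
theorem static_constraints_give_imaginary_eigenvector
    (q r : ℕ)
    (D R : Matrix (Fin q ⊕ Fin r) (Fin q ⊕ Fin r) ℝ)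
    (hD : D.PosSemidef) (hR : R.PosSemidef)
    (E : Matrix (Fin r) (Fin q) ℂ)
    (Γ : Matrix (Fin q) (Fin q) ℂ)
    (h : (D.map Complex.ofReal + Complex.I • R.map Complex.ofReal) *
          Matrix.fromBlocks 1 0 E 0 = Matrix.fromBlocks Γ 0 0 0)
    (y : Fin q → ℂ) (g : Fin r → ℂ) (μ : ℝ)
    (hDz : (D.map Complex.ofReal).mulVec (Sum.elim y g) = 0)
    (hRz : (R.map Complex.ofReal).mulVec (Sum.elim y g) = Sum.elim ((μ : ℂ) • y) 0) :
    Γ.mulVec y = (Complex.I * μ) • y := by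
  set M : Matrix (Fin q ⊕ Fin r) (Fin q ⊕ Fin r) ℂ :=
    D.map Complex.ofReal + Complex.I • R.map Complex.ofReal with hM
  have hDt : Dᵀ = D := hD.isHermitian
  have hRt : Rᵀ = R := hR.isHermitian
  have hMT : Mᵀ = M := by
    rw [hM, Matrix.transpose_add, Matrix.transpose_smul, ← Matrix.transpose_map,
      ← Matrix.transpose_map, hDt, hRt]
  have hT : (Matrix.fromBlocks 1 0 E 0 : Matrix (Fin q ⊕ Fin r) (Fin q ⊕ Fin r) ℂ)ᵀ * M
      = (Matrix.fromBlocks Γ 0 0 0)ᵀ := by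
    rw [← hMT, ← Matrix.transpose_mul, h]
  have hsymm : Γᵀ = Γ := by
    have h1 : (Matrix.fromBlocks Γ 0 0 0 : Matrix (Fin q ⊕ Fin r) (Fin q ⊕ Fin r) ℂ)ᵀ *
        Matrix.fromBlocks 1 0 E 0
        = (Matrix.fromBlocks 1 0 E 0 : Matrix (Fin q ⊕ Fin r) (Fin q ⊕ Fin r) ℂ)ᵀ *
          Matrix.fromBlocks Γ 0 0 0 := by
      rw [← hT, Matrix.mul_assoc, h]
    have h2 := congrArg Matrix.toBlocks₁₁ h1
    simpa [Matrix.fromBlocks_transpose, Matrix.fromBlocks_multiply] using h2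
  have hMz : M.mulVec (Sum.elim y g) = Sum.elim ((Complex.I * μ) • y) 0 := by
    rw [hM, Matrix.add_mulVec, Matrix.smul_mulVec, hDz, hRz]
    funext i
    cases i <;> simp [mul_assoc]
  have h2 := congrArg (fun A => A.mulVec (Sum.elim y g)) hT
  simp only [← Matrix.mulVec_mulVec] at h2
  rw [hMz] at h2
  simp only [Matrix.fromBlocks_transpose, Matrix.fromBlocks_mulVec, Matrix.transpose_one,
    Matrix.transpose_zero, Matrix.one_mulVec, Matrix.zero_mulVec, Matrix.mulVec_zero,
    add_zero, zero_add] at h2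
  have h3 : Γᵀ.mulVec y = (Complex.I * μ) • y := by
    funext i
    have := congrFun h2 (Sum.inl i)
    simpa using this.symm
  rw [← hsymm, h3]
end

section
/- Let M, K ∈ ℝ^{n×n} be symmetric positive definite, B ∈ ℝ^{n}, ω > 0 with K − ω²M invertible, and Λ ∈ ℝ^{q×q} symmetric PSD. If x̄ ∈ ℂ^{nq} satisfies ((I_q ⊗ (K − ω²M)) + (Λ ⊗ BBᵀ)) x̄ = 0, then with ȳ = (I_q ⊗ Bᵀ)x̄ and α = Bᵀ(K − ω²M)⁻¹B, one has (I_q + αΛ) ȳ = 0; hence if ȳ ≠ 0 then α ≠ 0 and −1/α is an eigenvalue of Λ with eigenvector ȳ. -/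
/-!
Write `A = K - ω²M` and let `X` be the `n × q` matrix whose columns are the blocks of `x̄`, so
that `x̄ = vec X` and `ȳᵀ = BᵀX`. The Kronecker equation says `A X + B (BᵀX) Λᵀ = 0`, i.e.
`A X = -B (Λȳ)ᵀ`, a rank-one matrix. Inverting `A` gives `X = -(A⁻¹B)(Λȳ)ᵀ`, and multiplying
by `Bᵀ` on the left yields `ȳ = -α Λȳ`. If `ȳ ≠ 0` this forces `α ≠ 0` and `Λȳ = (-1/α) ȳ`.
-/

open Matrix Kronecker

namespace Matrix

variable {m n R : Type*} [DecidableEq m]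

theorem map_kronecker_one_add_kronecker_vecMulVec {S : Type*} [CommRing R] [CommRing S]
    (f : R →+* S) (A : Matrix n n R) (Λ : Matrix m m R) (b : n → R) :
    (1 ⊗ₖ A + Λ ⊗ₖ vecMulVec b b).map f =
      1 ⊗ₖ A.map f + Λ.map f ⊗ₖ vecMulVec (f ∘ b) (f ∘ b) := by
  ext ⟨i, k⟩ ⟨j, l⟩
  simp [one_apply, vecMulVec_apply, apply_ite f]

variable [Fintype m] [Fintype n] [DecidableEq n]

theorem map_nonsing_inv {S : Type*} [CommRing R] [CommRing S] (f : R →+* S) {A : Matrix n n R}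
    (hA : IsUnit A) : A⁻¹.map f = (A.map f)⁻¹ := by
  refine (inv_eq_right_inv ?_).symm
  rw [← Matrix.map_mul, mul_nonsing_inv A ((isUnit_iff_isUnit_det A).mp hA)]
  simp

theorem _root_.RingHom.map_dotProduct_nonsing_inv_mulVec {S : Type*} [CommRing R] [CommRing S]
    (f : R →+* S) {A : Matrix n n R} (hA : IsUnit A) (b : n → R) :
    f (b ⬝ᵥ A⁻¹ *ᵥ b) = (f ∘ b) ⬝ᵥ (A.map f)⁻¹ *ᵥ (f ∘ b) := by
  rw [f.map_dotProduct, ← map_nonsing_inv f hA]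
  congr 1
  exact funext (f.map_mulVec _ _)

variable [CommRing R] {A : Matrix n n R} {Λ : Matrix m m R} {b : n → R} {X : Matrix n m R}

omit [DecidableEq m] in
theorem vecMul_add_smul_mulVec_vecMul_eq_zero (hA : IsUnit A)
    (hX : A * X + vecMulVec b b * X * Λᵀ = 0) :
    b ᵥ* X + (b ⬝ᵥ A⁻¹ *ᵥ b) • Λ *ᵥ (b ᵥ* X) = 0 := by
  have hAX : A * X = -vecMulVec b (Λ *ᵥ (b ᵥ* X)) := by
    rw [eq_neg_iff_add_eq_zero, ← hX, vecMulVec_mul, vecMulVec_mul, vecMul_transpose]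
  have hX' : X = -vecMulVec (A⁻¹ *ᵥ b) (Λ *ᵥ (b ᵥ* X)) :=
    calc X = A⁻¹ * (A * X) :=
          (nonsing_inv_mul_cancel_left A X ((isUnit_iff_isUnit_det A).mp hA)).symm
      _ = _ := by rw [hAX, Matrix.mul_neg, mul_vecMulVec]
  nth_rw 1 [hX']
  rw [vecMul_neg, vecMul_vecMulVec, neg_add_cancel]

theorem one_add_smul_mulVec_vecMul_eq_zero_of_kronecker (hA : IsUnit A)
    (hX : (1 ⊗ₖ A + Λ ⊗ₖ vecMulVec b b) *ᵥ vec X = 0) :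
    (1 + (b ⬝ᵥ A⁻¹ *ᵥ b) • Λ) *ᵥ (b ᵥ* X) = 0 := by
  rw [add_mulVec, ← vec_mul_eq_mulVec, kronecker_mulVec_vec, ← vec_add, ← vec_zero, vec_inj] at hX
  rw [add_mulVec, one_mulVec, smul_mulVec]
  exact vecMul_add_smul_mulVec_vecMul_eq_zero hA hX

theorem mulVec_eq_smul_of_one_add_smul_mulVec_eq_zero {K : Type*} [Field K]
    {Λ : Matrix m m K} {α : K} {y : m → K}
    (h : (1 + α • Λ) *ᵥ y = 0) (hy : y ≠ 0) :
    α ≠ 0 ∧ Λ *ᵥ y = (-1 / α) • y := by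
  rw [add_mulVec, one_mulVec, smul_mulVec, add_eq_zero_iff_eq_neg'] at h
  have hα : α ≠ 0 := by
    rintro rfl
    exact hy (by simpa using h.symm)
  refine ⟨hα, ?_⟩
  calc Λ *ᵥ y = α⁻¹ • α • Λ *ᵥ y := (inv_smul_smul₀ hα _).symm
    _ = (-1 / α) • y := by rw [h, smul_neg, ← neg_smul, neg_div, one_div]

end Matrix

theorem kernel_vector_gives_Lambda_eigenvector_general
    (n q : ℕ)
    (M K : Matrix (Fin n) (Fin n) ℝ)
    (B : Fin n → ℝ) (ω : ℝ)
    (hinv : IsUnit (K - ω ^ 2 • M))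
    (Λ : Matrix (Fin q) (Fin q) ℝ)
    (xbar : Fin q × Fin n → ℂ)
    (hx : (((1 : Matrix (Fin q) (Fin q) ℝ) ⊗ₖ (K - ω ^ 2 • M) +
            Λ ⊗ₖ Matrix.vecMulVec B B).map Complex.ofReal).mulVec xbar = 0)
    (ybar : Fin q → ℂ) (hy : ∀ i, ybar i = ∑ k, (B k : ℂ) * xbar (i, k))
    (α : ℝ) (hα : α = B ⬝ᵥ (K - ω ^ 2 • M)⁻¹.mulVec B) :
    ((1 : Matrix (Fin q) (Fin q) ℂ) + (α : ℂ) • Λ.map Complex.ofReal).mulVec ybar = 0 ∧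
      (ybar ≠ 0 → α ≠ 0 ∧
        (Λ.map Complex.ofReal).mulVec ybar = ((-1 / α : ℝ) : ℂ) • ybar) := by
  have hcoe : Complex.ofReal = ⇑Complex.ofRealHom := rfl
  rw [hcoe, map_kronecker_one_add_kronecker_vecMulVec] at hx
  rw [hcoe]
  set X : Matrix (Fin n) (Fin q) ℂ := of fun k i => xbar (i, k)
  have hybar : ybar = (Complex.ofRealHom ∘ B) ᵥ* X := by
    ext i
    simp [hy, X, vecMul, dotProduct]
  have hαℂ : (α : ℂ) = (Complex.ofRealHom ∘ B) ⬝ᵥ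
      ((K - ω ^ 2 • M).map Complex.ofRealHom)⁻¹ *ᵥ (Complex.ofRealHom ∘ B) := by
    rw [hα, ← Complex.ofRealHom.map_dotProduct_nonsing_inv_mulVec hinv, Complex.ofRealHom_eq_coe]
  have hkernel : (1 + (α : ℂ) • Λ.map Complex.ofRealHom) *ᵥ ybar = 0 := by
    rw [hαℂ, hybar]
    exact one_add_smul_mulVec_vecMul_eq_zero_of_kronecker (hinv.map Complex.ofRealHom.mapMatrix) hx
  refine ⟨hkernel, fun hy0 => ?_⟩
  obtain ⟨hα0, heigen⟩ := mulVec_eq_smul_of_one_add_smul_mulVec_eq_zero hkernel hy0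
  refine ⟨by exact_mod_cast hα0, ?_⟩
  rw [heigen, Complex.ofRealHom_eq_coe, Complex.ofReal_div, Complex.ofReal_neg, Complex.ofReal_one]

open Matrix Kronecker in
theorem kernel_vector_gives_Lambda_eigenvector
    (n q : ℕ)
    (M K : Matrix (Fin n) (Fin n) ℝ)
    (hM : M.PosDef) (hK : K.PosDef)
    (B : Fin n → ℝ) (ω : ℝ) (hω : 0 < ω)
    (hinv : IsUnit (K - ω ^ 2 • M))
    (Λ : Matrix (Fin q) (Fin q) ℝ) (hΛ : Λ.PosSemidef)
    (xbar : Fin q × Fin n → ℂ)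
    (hx : (((1 : Matrix (Fin q) (Fin q) ℝ) ⊗ₖ (K - ω ^ 2 • M) +
            Λ ⊗ₖ Matrix.vecMulVec B B).map Complex.ofReal).mulVec xbar = 0)
    (ybar : Fin q → ℂ) (hy : ∀ i, ybar i = ∑ k, (B k : ℂ) * xbar (i, k))
    (α : ℝ) (hα : α = B ⬝ᵥ (K - ω ^ 2 • M)⁻¹.mulVec B) :
    ((1 : Matrix (Fin q) (Fin q) ℂ) + (α : ℂ) • Λ.map Complex.ofReal).mulVec ybar = 0 ∧
      (ybar ≠ 0 → α ≠ 0 ∧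
        (Λ.map Complex.ofReal).mulVec ybar = ((-1 / α : ℝ) : ℂ) • ybar) :=
  kernel_vector_gives_Lambda_eigenvector_general n q M K B ω hinv Λ xbar hx ybar hy α hα
end
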